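/- arXiv:1811.00134 — 2 statements merged into one kernel-verified Lean document; each statement's English description precedes it below -/
import Mathlib

section
/- Let k be a commutative ring of characteristic 2. For each index i in ℤ/3 let (M_i, d_i) be a differential k-module, and let f_i : M_i → M_{i+1}, φ_i : M_i → M_{i+2}, and κ_i : M_i → M_i be k-linear maps satisfying, for every i: (1) d_{i+1} ∘ f_i = f_i ∘ d_i (each f_i is a chain map); (2) f_{i+1} ∘ f_i + d_{i+2} ∘ φ_i + φ_i ∘ d_i = 0 (f_{i+1} ∘ f_i is null-homotopic via φ_i); (3) f_{i+2} ∘ φ_i + φ_{i+1} ∘ f_i + d_i ∘ κ_i + κ_i ∘ d_i = id_{M_i} (f_{i+2} ∘ φ_i + φ_{i+1} ∘ f_i is homotopic to the identity via κ_i). Then for every i, the differential module (M_i, d_i) is homotopy equivalent to the mapping cone Cone(f_{i+1}) of f_{i+1} : M_{i+1} → M_{i+2}. -/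
/-- `u` is a chain map from the differential module `(A, dA)` to `(B, dB)`. -/
def IsChainMap {k A B : Type*} [CommRing k]
    [AddCommGroup A] [Module k A] [AddCommGroup B] [Module k B]
    (dA : A →ₗ[k] A) (dB : B →ₗ[k] B) (u : A →ₗ[k] B) : Prop :=
  u ∘ₗ dA = dB ∘ₗ u

/-- The mapping cone differential (over a ring of characteristic 2) of a map
`f : (A, dA) → (B, dB)`: on `A × B` it is `(x, y) ↦ (dA x, f x + dB y)`. -/
def coneD {k A B : Type*} [CommRing k]
    [AddCommGroup A] [Module k A] [AddCommGroup B] [Module k B]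
    (dA : A →ₗ[k] A) (dB : B →ₗ[k] B) (f : A →ₗ[k] B) : (A × B) →ₗ[k] (A × B) :=
  LinearMap.prod (dA ∘ₗ LinearMap.fst k A B)
    (f ∘ₗ LinearMap.fst k A B + dB ∘ₗ LinearMap.snd k A B)

/-- `(A, dA)` and `(B, dB)` are homotopy equivalent differential modules. -/
def HomotopyEquivalent {k A B : Type*} [CommRing k]
    [AddCommGroup A] [Module k A] [AddCommGroup B] [Module k B]
    (dA : A →ₗ[k] A) (dB : B →ₗ[k] B) : Prop :=
  ∃ (u : A →ₗ[k] B) (v : B →ₗ[k] A) (H : A →ₗ[k] A) (K : B →ₗ[k] B),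
    IsChainMap dA dB u ∧ IsChainMap dB dA v ∧
    v ∘ₗ u + LinearMap.id = dA ∘ₗ H + H ∘ₗ dA ∧
    u ∘ₗ v + LinearMap.id = dB ∘ₗ K + K ∘ₗ dB


/-!
With `u = (f₀, φ₀) : M₀ → Cone(f₁)` and `v = (φ₁, f₂) : Cone(f₁) → M₀`, the hypotheses say
directly that `u` and `v` are chain maps and that `κ₀` is a homotopy `v ∘ u ≃ id`. The other
composite is only homotopic to `id + N`, where `N (y, z) = (0, θ y)` for the chain map
`θ = f₁ κ₁ + κ₂ f₁ + φ₀ φ₁`. As `N ∘ N = 0` and the characteristic is 2, `id + N` is its own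
inverse, so `v ∘ (id + N)` is a right homotopy inverse of `u`, while `v` is a left one; hence `u` is
a homotopy equivalence.
-/

open LinearMap

theorem add_self_eq_zero_of_charTwo (k : Type*) {M : Type*} [Ring k] [CharP k 2]
    [AddCommGroup M] [Module k M] (x : M) : x + x = 0 := by
  rw [← two_smul k x, CharTwo.two_eq_zero, zero_smul]

section DifferentialModules

variable {k A B C : Type*} [CommRing k]
  [AddCommGroup A] [Module k A] [AddCommGroup B] [Module k B] [AddCommGroup C] [Module k C]
  {dA : A →ₗ[k] A} {dB : B →ₗ[k] B} {dC : C →ₗ[k] C}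

theorem isChainMap_id : IsChainMap dA dA LinearMap.id := by
  simp [IsChainMap]

theorem IsChainMap.comp {u : A →ₗ[k] B} {v : B →ₗ[k] C}
    (hu : IsChainMap dA dB u) (hv : IsChainMap dB dC v) : IsChainMap dA dC (v ∘ₗ u) := by
  unfold IsChainMap at *
  rw [comp_assoc, hu, ← comp_assoc, hv, comp_assoc]

theorem IsChainMap.add {u v : A →ₗ[k] B}
    (hu : IsChainMap dA dB u) (hv : IsChainMap dA dB v) : IsChainMap dA dB (u + v) := by
  unfold IsChainMap at *
  rw [add_comp, comp_add, hu, hv]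

theorem IsChainMap.apply {u : A →ₗ[k] B} (hu : IsChainMap dA dB u) (x : A) :
    u (dA x) = dB (u x) :=
  LinearMap.congr_fun hu x

def Homotopic (dA : A →ₗ[k] A) (dB : B →ₗ[k] B) (p q : A →ₗ[k] B) : Prop :=
  ∃ H : A →ₗ[k] B, p + q = dB ∘ₗ H + H ∘ₗ dA

namespace Homotopic

variable {p q r : A →ₗ[k] B}

theorem symm (h : Homotopic dA dB p q) : Homotopic dA dB q p := by
  obtain ⟨H, hH⟩ := h
  exact ⟨H, by rw [add_comm, hH]⟩

theorem trans [CharP k 2] (h₁ : Homotopic dA dB p q) (h₂ : Homotopic dA dB q r) :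
    Homotopic dA dB p r := by
  obtain ⟨H₁, hH₁⟩ := h₁
  obtain ⟨H₂, hH₂⟩ := h₂
  refine ⟨H₁ + H₂, ?_⟩
  -- The scalar `(1 : k)` makes `match_scalars` compare coefficients in `k`, where
  -- `reduce_mod_char!` knows that `2 = 0`.
  linear_combination (norm := skip) (1 : k) • hH₁ + hH₂
  simp only [comp_add, add_comp]
  match_scalars <;> reduce_mod_char!

theorem comp_left {a : B →ₗ[k] C} (h : Homotopic dA dB p q) (ha : IsChainMap dB dC a) :
    Homotopic dA dC (a ∘ₗ p) (a ∘ₗ q) := by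
  obtain ⟨H, hH⟩ := h
  refine ⟨a ∘ₗ H, ?_⟩
  rw [← comp_add, hH, comp_add, ← comp_assoc, ha, comp_assoc, comp_assoc]

theorem comp_right {b : C →ₗ[k] A} (h : Homotopic dA dB p q) (hb : IsChainMap dC dA b) :
    Homotopic dC dB (p ∘ₗ b) (q ∘ₗ b) := by
  obtain ⟨H, hH⟩ := h
  refine ⟨H ∘ₗ b, ?_⟩
  rw [← add_comp, hH]
  simp only [add_comp, comp_assoc]
  rw [hb]

end Homotopic

theorem HomotopyEquivalent.of_homotopic_left_right [CharP k 2] {u : A →ₗ[k] B} {v w : B →ₗ[k] A}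
    (hu : IsChainMap dA dB u) (hv : IsChainMap dB dA v) (hw : IsChainMap dB dA w)
    (hvu : Homotopic dA dA (v ∘ₗ u) LinearMap.id) (huw : Homotopic dB dB (u ∘ₗ w) LinearMap.id) :
    HomotopyEquivalent dA dB := by
  have hwu : Homotopic dA dA (w ∘ₗ u) LinearMap.id := by
    have h₁ : Homotopic dA dA (v ∘ₗ u ∘ₗ w ∘ₗ u) (w ∘ₗ u) := by
      simpa only [comp_assoc, id_comp] using hvu.comp_right (hu.comp hw)
    have h₂ : Homotopic dA dA (v ∘ₗ u ∘ₗ w ∘ₗ u) (v ∘ₗ u) := by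
      simpa only [comp_assoc, id_comp] using (huw.comp_right hu).comp_left hv
    exact h₁.symm.trans (h₂.trans hvu)
  obtain ⟨H, hH⟩ := hwu
  obtain ⟨K, hK⟩ := huw
  exact ⟨u, w, H, K, hu, hw, hH, hK⟩

end DifferentialModules

section Cone

variable {k A B X : Type*} [CommRing k]
  [AddCommGroup A] [Module k A] [AddCommGroup B] [Module k B] [AddCommGroup X] [Module k X]
  {dA : A →ₗ[k] A} {dB : B →ₗ[k] B} {dX : X →ₗ[k] X} {f : A →ₗ[k] B}

@[simp]
theorem coneD_apply (x : A) (y : B) : coneD dA dB f (x, y) = (dA x, f x + dB y) := rfl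

theorem isChainMap_prod_coneD [CharP k 2] {g : X →ₗ[k] A} {h : X →ₗ[k] B}
    (hg : IsChainMap dX dA g) (hh : f ∘ₗ g + dB ∘ₗ h + h ∘ₗ dX = 0) :
    IsChainMap dX (coneD dA dB f) (g.prod h) := by
  unfold IsChainMap at *
  simp only [coneD, prod_comp, comp_assoc, fst_prod, snd_prod, add_comp, hg]
  congr 1
  linear_combination (norm := skip) (1 : k) • hh
  match_scalars <;> reduce_mod_char!

theorem isChainMap_coprod_coneD [CharP k 2] {g : A →ₗ[k] X} {h : B →ₗ[k] X}
    (hg : h ∘ₗ f + dX ∘ₗ g + g ∘ₗ dA = 0) (hh : IsChainMap dB dX h) :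
    IsChainMap (coneD dA dB f) dX (g.coprod h) := by
  ext x
  · simp only [comp_apply, inl_apply, coneD_apply, coprod_apply, map_zero, add_zero]
    linear_combination (norm := skip) (1 : k) • LinearMap.congr_fun hg x
    simp only [LinearMap.add_apply, comp_apply, LinearMap.zero_apply]
    match_scalars <;> reduce_mod_char!
  · simpa using hh.apply x

theorem isChainMap_inr_comp_fst {θ : A →ₗ[k] B} (hθ : IsChainMap dA dB θ) :
    IsChainMap (coneD dA dB f) (coneD dA dB f) (inr k A B ∘ₗ θ ∘ₗ fst k A B) := by
  ext x <;> simp [hθ.apply]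

theorem id_add_inr_comp_fst_comp_self [CharP k 2] (θ : A →ₗ[k] B) :
    (LinearMap.id + inr k A B ∘ₗ θ ∘ₗ fst k A B) ∘ₗ (LinearMap.id + inr k A B ∘ₗ θ ∘ₗ fst k A B) =
      LinearMap.id := by
  ext x <;> simp [add_self_eq_zero_of_charTwo k]

end Cone

section Triangle

variable {k A B C : Type*} [CommRing k] [CharP k 2]
  [AddCommGroup A] [Module k A] [AddCommGroup B] [Module k B] [AddCommGroup C] [Module k C]
  {dA : A →ₗ[k] A} {dB : B →ₗ[k] B} {dC : C →ₗ[k] C}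
  {f0 : A →ₗ[k] B} {f1 : B →ₗ[k] C} {f2 : C →ₗ[k] A}
  {φ0 : A →ₗ[k] C} {φ1 : B →ₗ[k] A} {φ2 : C →ₗ[k] B}
  {κ0 : A →ₗ[k] A} {κ1 : B →ₗ[k] B} {κ2 : C →ₗ[k] C}

def triangleDefect (f1 : B →ₗ[k] C) (φ0 : A →ₗ[k] C) (φ1 : B →ₗ[k] A) (κ1 : B →ₗ[k] B)
    (κ2 : C →ₗ[k] C) : B →ₗ[k] C :=
  f1 ∘ₗ κ1 + κ2 ∘ₗ f1 + φ0 ∘ₗ φ1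

theorem isChainMap_triangleDefect (h1₁ : dC ∘ₗ f1 = f1 ∘ₗ dB)
    (h2₀ : f1 ∘ₗ f0 + dC ∘ₗ φ0 + φ0 ∘ₗ dA = 0) (h2₁ : f2 ∘ₗ f1 + dA ∘ₗ φ1 + φ1 ∘ₗ dB = 0)
    (h3₁ : f0 ∘ₗ φ1 + φ2 ∘ₗ f1 + dB ∘ₗ κ1 + κ1 ∘ₗ dB = LinearMap.id)
    (h3₂ : f1 ∘ₗ φ2 + φ0 ∘ₗ f2 + dC ∘ₗ κ2 + κ2 ∘ₗ dC = LinearMap.id) :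
    IsChainMap dB dC (triangleDefect f1 φ0 φ1 κ1 κ2) := by
  unfold IsChainMap triangleDefect
  linear_combination (norm := skip) (1 : k) • congr(f1 ∘ₗ $h3₁) + congr($h3₂ ∘ₗ f1)
    + congr($h2₀ ∘ₗ φ1) + congr(φ0 ∘ₗ $h2₁) + congr($h1₁ ∘ₗ κ1) + congr(κ2 ∘ₗ $h1₁)
  simp only [comp_add, add_comp, comp_assoc, comp_id, id_comp, comp_zero, zero_comp]
  match_scalars <;> reduce_mod_char!

theorem homotopic_coprod_comp_prod
    (h3₀ : f2 ∘ₗ φ0 + φ1 ∘ₗ f0 + dA ∘ₗ κ0 + κ0 ∘ₗ dA = LinearMap.id) :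
    Homotopic dA dA (φ1.coprod f2 ∘ₗ f0.prod φ0) LinearMap.id := by
  refine ⟨κ0, ?_⟩
  rw [coprod_comp_prod]
  linear_combination (norm := skip) (1 : k) • h3₀
  match_scalars <;> reduce_mod_char!

theorem homotopic_prod_comp_coprod (h2₂ : f0 ∘ₗ f2 + dB ∘ₗ φ2 + φ2 ∘ₗ dC = 0)
    (h3₁ : f0 ∘ₗ φ1 + φ2 ∘ₗ f1 + dB ∘ₗ κ1 + κ1 ∘ₗ dB = LinearMap.id)
    (h3₂ : f1 ∘ₗ φ2 + φ0 ∘ₗ f2 + dC ∘ₗ κ2 + κ2 ∘ₗ dC = LinearMap.id) :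
    Homotopic (coneD dB dC f1) (coneD dB dC f1) (f0.prod φ0 ∘ₗ φ1.coprod f2)
      (LinearMap.id + inr k B C ∘ₗ triangleDefect f1 φ0 φ1 κ1 κ2 ∘ₗ fst k B C) := by
  refine ⟨(κ1.coprod φ2).prod (κ2 ∘ₗ snd k B C), ?_⟩
  simp only [LinearMap.ext_iff, LinearMap.add_apply, comp_apply, LinearMap.zero_apply,
    id_apply] at h2₂ h3₁ h3₂
  ext x <;>
    simp only [triangleDefect, coe_comp, coe_inl, coe_inr, coe_fst, coe_snd, Function.comp_apply,
      LinearMap.add_apply, coprod_apply, LinearMap.prod_apply, Function.prod_apply, id_coe, id_eq,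
      coneD_apply, map_zero, add_zero, zero_add, Prod.mk_add_mk]
  · linear_combination (norm := skip) (1 : k) • h3₁ x
    match_scalars <;> reduce_mod_char!
  · rw [add_comm, add_assoc, add_self_eq_zero_of_charTwo k, add_zero]
  · linear_combination (norm := skip) (1 : k) • h2₂ x
    match_scalars <;> reduce_mod_char!
  · linear_combination (norm := skip) (1 : k) • h3₂ x
    match_scalars <;> reduce_mod_char!

theorem homotopyEquivalent_coneD_of_triangle
    (h1₀ : dB ∘ₗ f0 = f0 ∘ₗ dA) (h1₁ : dC ∘ₗ f1 = f1 ∘ₗ dB) (h1₂ : dA ∘ₗ f2 = f2 ∘ₗ dC)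
    (h2₀ : f1 ∘ₗ f0 + dC ∘ₗ φ0 + φ0 ∘ₗ dA = 0)
    (h2₁ : f2 ∘ₗ f1 + dA ∘ₗ φ1 + φ1 ∘ₗ dB = 0)
    (h2₂ : f0 ∘ₗ f2 + dB ∘ₗ φ2 + φ2 ∘ₗ dC = 0)
    (h3₀ : f2 ∘ₗ φ0 + φ1 ∘ₗ f0 + dA ∘ₗ κ0 + κ0 ∘ₗ dA = LinearMap.id)
    (h3₁ : f0 ∘ₗ φ1 + φ2 ∘ₗ f1 + dB ∘ₗ κ1 + κ1 ∘ₗ dB = LinearMap.id)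
    (h3₂ : f1 ∘ₗ φ2 + φ0 ∘ₗ f2 + dC ∘ₗ κ2 + κ2 ∘ₗ dC = LinearMap.id) :
    HomotopyEquivalent dA (coneD dB dC f1) := by
  set N := inr k B C ∘ₗ triangleDefect f1 φ0 φ1 κ1 κ2 ∘ₗ fst k B C
  have hN : IsChainMap (coneD dB dC f1) (coneD dB dC f1) (LinearMap.id + N) :=
    isChainMap_id.add (isChainMap_inr_comp_fst (isChainMap_triangleDefect h1₁ h2₀ h2₁ h3₁ h3₂))
  have hu : IsChainMap dA (coneD dB dC f1) (f0.prod φ0) := isChainMap_prod_coneD h1₀.symm h2₀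
  have hv : IsChainMap (coneD dB dC f1) dA (φ1.coprod f2) := isChainMap_coprod_coneD h2₁ h1₂.symm
  have huw := (homotopic_prod_comp_coprod h2₂ h3₁ h3₂).comp_right hN
  rw [id_add_inr_comp_fst_comp_self, comp_assoc] at huw
  exact .of_homotopic_left_right hu hv (hN.comp hv) (homotopic_coprod_comp_prod h3₀) huw

end Triangle

theorem stmt0_general {k M0 M1 M2 : Type*} [CommRing k] [CharP k 2]
    [AddCommGroup M0] [Module k M0] [AddCommGroup M1] [Module k M1]
    [AddCommGroup M2] [Module k M2]
    (d0 : M0 →ₗ[k] M0) (d1 : M1 →ₗ[k] M1) (d2 : M2 →ₗ[k] M2)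
    (f0 : M0 →ₗ[k] M1) (f1 : M1 →ₗ[k] M2) (f2 : M2 →ₗ[k] M0)
    (φ0 : M0 →ₗ[k] M2) (φ1 : M1 →ₗ[k] M0) (φ2 : M2 →ₗ[k] M1)
    (κ0 : M0 →ₗ[k] M0) (κ1 : M1 →ₗ[k] M1) (κ2 : M2 →ₗ[k] M2)
    (h1₀ : d1 ∘ₗ f0 = f0 ∘ₗ d0) (h1₁ : d2 ∘ₗ f1 = f1 ∘ₗ d1) (h1₂ : d0 ∘ₗ f2 = f2 ∘ₗ d2)
    (h2₀ : f1 ∘ₗ f0 + d2 ∘ₗ φ0 + φ0 ∘ₗ d0 = 0)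
    (h2₁ : f2 ∘ₗ f1 + d0 ∘ₗ φ1 + φ1 ∘ₗ d1 = 0)
    (h2₂ : f0 ∘ₗ f2 + d1 ∘ₗ φ2 + φ2 ∘ₗ d2 = 0)
    (h3₀ : f2 ∘ₗ φ0 + φ1 ∘ₗ f0 + d0 ∘ₗ κ0 + κ0 ∘ₗ d0 = LinearMap.id)
    (h3₁ : f0 ∘ₗ φ1 + φ2 ∘ₗ f1 + d1 ∘ₗ κ1 + κ1 ∘ₗ d1 = LinearMap.id)
    (h3₂ : f1 ∘ₗ φ2 + φ0 ∘ₗ f2 + d2 ∘ₗ κ2 + κ2 ∘ₗ d2 = LinearMap.id) :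
    HomotopyEquivalent d0 (coneD d1 d2 f1) ∧
    HomotopyEquivalent d1 (coneD d2 d0 f2) ∧
    HomotopyEquivalent d2 (coneD d0 d1 f0) :=
  ⟨homotopyEquivalent_coneD_of_triangle h1₀ h1₁ h1₂ h2₀ h2₁ h2₂ h3₀ h3₁ h3₂,
    homotopyEquivalent_coneD_of_triangle h1₁ h1₂ h1₀ h2₁ h2₂ h2₀ h3₁ h3₂ h3₀,
    homotopyEquivalent_coneD_of_triangle h1₂ h1₀ h1₁ h2₂ h2₀ h2₁ h3₂ h3₀ h3₁⟩

/-- Lemma 2.1 (triangle detection): given differential modules `M₀, M₁, M₂` indexed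
cyclically by `ℤ/3`, chain maps `fᵢ : Mᵢ → Mᵢ₊₁`, homotopies `φᵢ : Mᵢ → Mᵢ₊₂` with
`fᵢ₊₁ ∘ fᵢ + d φᵢ = 0`, and homotopies `κᵢ` with `fᵢ₊₂ ∘ φᵢ + φᵢ₊₁ ∘ fᵢ + d κᵢ = id`,
each `Mᵢ` is homotopy equivalent to the mapping cone of `fᵢ₊₁ : Mᵢ₊₁ → Mᵢ₊₂`. -/
theorem stmt0 {k M0 M1 M2 : Type*} [CommRing k] [CharP k 2]
    [AddCommGroup M0] [Module k M0] [AddCommGroup M1] [Module k M1]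
    [AddCommGroup M2] [Module k M2]
    (d0 : M0 →ₗ[k] M0) (d1 : M1 →ₗ[k] M1) (d2 : M2 →ₗ[k] M2)
    (hd0 : d0 ∘ₗ d0 = 0) (hd1 : d1 ∘ₗ d1 = 0) (hd2 : d2 ∘ₗ d2 = 0)
    (f0 : M0 →ₗ[k] M1) (f1 : M1 →ₗ[k] M2) (f2 : M2 →ₗ[k] M0)
    (φ0 : M0 →ₗ[k] M2) (φ1 : M1 →ₗ[k] M0) (φ2 : M2 →ₗ[k] M1)
    (κ0 : M0 →ₗ[k] M0) (κ1 : M1 →ₗ[k] M1) (κ2 : M2 →ₗ[k] M2)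
    (h1₀ : d1 ∘ₗ f0 = f0 ∘ₗ d0) (h1₁ : d2 ∘ₗ f1 = f1 ∘ₗ d1) (h1₂ : d0 ∘ₗ f2 = f2 ∘ₗ d2)
    (h2₀ : f1 ∘ₗ f0 + d2 ∘ₗ φ0 + φ0 ∘ₗ d0 = 0)
    (h2₁ : f2 ∘ₗ f1 + d0 ∘ₗ φ1 + φ1 ∘ₗ d1 = 0)
    (h2₂ : f0 ∘ₗ f2 + d1 ∘ₗ φ2 + φ2 ∘ₗ d2 = 0)
    (h3₀ : f2 ∘ₗ φ0 + φ1 ∘ₗ f0 + d0 ∘ₗ κ0 + κ0 ∘ₗ d0 = LinearMap.id)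
    (h3₁ : f0 ∘ₗ φ1 + φ2 ∘ₗ f1 + d1 ∘ₗ κ1 + κ1 ∘ₗ d1 = LinearMap.id)
    (h3₂ : f1 ∘ₗ φ2 + φ0 ∘ₗ f2 + d2 ∘ₗ κ2 + κ2 ∘ₗ d2 = LinearMap.id) :
    HomotopyEquivalent d0 (coneD d1 d2 f1) ∧
    HomotopyEquivalent d1 (coneD d2 d0 f2) ∧
    HomotopyEquivalent d2 (coneD d0 d1 f0) :=
  stmt0_general d0 d1 d2 f0 f1 f2 φ0 φ1 φ2 κ0 κ1 κ2 h1₀ h1₁ h1₂ h2₀ h2₁ h2₂ h3₀ h3₁ h3₂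
end

section
/- Let k be a commutative ring of characteristic 2. For each index i in ℤ/3 let (M_i, d_i) be a differential k-module, and let f_i : M_i → M_{i+1}, φ_i : M_i → M_{i+2}, and κ_i : M_i → M_i be k-linear maps satisfying, for every i: (1) d_{i+1} ∘ f_i = f_i ∘ d_i; (2) f_{i+1} ∘ f_i + d_{i+2} ∘ φ_i + φ_i ∘ d_i = 0; (3) f_{i+2} ∘ φ_i + φ_{i+1} ∘ f_i + d_i ∘ κ_i + κ_i ∘ d_i = id_{M_i}. Then the induced triangle of homology maps is exact; concretely, for every i and every x ∈ M_{i+1} with d_{i+1} x = 0, one has: f_{i+1} x lies in the image of d_{i+2} if and only if there exist y ∈ M_i with d_i y = 0 and z ∈ M_{i+1} such that x = f_i y + d_{i+1} z. -/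

private lemma char2_add_self {k M : Type*} [CommRing k] [CharP k 2]
    [AddCommGroup M] [Module k M] (m : M) : m + m = 0 := by
  have h : (2 : k) • m = 0 := by
    rw [show (2 : k) = 0 from CharP.cast_eq_zero k 2, zero_smul]
  simpa [two_smul] using h

private lemma triangle_aux {k A B C : Type*} [CommRing k] [CharP k 2]
    [AddCommGroup A] [Module k A] [AddCommGroup B] [Module k B]
    [AddCommGroup C] [Module k C]
    (dA : A →ₗ[k] A) (dB : B →ₗ[k] B) (dC : C →ₗ[k] C)
    (fA : A →ₗ[k] B) (fB : B →ₗ[k] C) (fC : C →ₗ[k] A)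
    (φA : A →ₗ[k] C) (φB : B →ₗ[k] A) (φC : C →ₗ[k] B)
    (κB : B →ₗ[k] B)
    (h1B : dC ∘ₗ fB = fB ∘ₗ dB) (h1C : dA ∘ₗ fC = fC ∘ₗ dC)
    (h2A : fB ∘ₗ fA + dC ∘ₗ φA + φA ∘ₗ dA = 0)
    (h2B : fC ∘ₗ fB + dA ∘ₗ φB + φB ∘ₗ dB = 0)
    (h2C : fA ∘ₗ fC + dB ∘ₗ φC + φC ∘ₗ dC = 0)
    (h3B : fA ∘ₗ φB + φC ∘ₗ fB + dB ∘ₗ κB + κB ∘ₗ dB = LinearMap.id)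
    (x : B) (hx : dB x = 0) :
    (∃ w : C, dC w = fB x) ↔ ∃ y : A, dA y = 0 ∧ ∃ z : B, x = fA y + dB z := by
  constructor
  · rintro ⟨w, hw⟩
    have e2B := LinearMap.congr_fun h2B x
    have e2C := LinearMap.congr_fun h2C w
    have e3B := LinearMap.congr_fun h3B x
    simp only [LinearMap.add_apply, LinearMap.comp_apply, LinearMap.zero_apply,
      LinearMap.id_apply, hx, map_zero, add_zero] at e2B e2C e3B
    have h1w : dA (fC w) = fC (fB x) := by
      have h := LinearMap.congr_fun h1C w
      simp only [LinearMap.comp_apply] at h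
      rw [h, hw]
    refine ⟨φB x + fC w, ?_, φC w + κB x, ?_⟩
    · rw [map_add, h1w, add_comm]
      exact e2B
    · rw [hw] at e2C
      have hC : fA (fC w) + dB (φC w) = φC (fB x) := by
        calc fA (fC w) + dB (φC w)
            = fA (fC w) + dB (φC w) + (φC (fB x) + φC (fB x)) := by
              rw [char2_add_self (k := k), add_zero]
          _ = (fA (fC w) + dB (φC w) + φC (fB x)) + φC (fB x) := by abel
          _ = φC (fB x) := by rw [e2C, zero_add]
      rw [map_add, map_add]
      calc x = fA (φB x) + φC (fB x) + dB (κB x) := e3B.symm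
          _ = fA (φB x) + (fA (fC w) + dB (φC w)) + dB (κB x) := by rw [hC]
          _ = fA (φB x) + fA (fC w) + (dB (φC w) + dB (κB x)) := by abel
  · rintro ⟨y, hy, z, rfl⟩
    refine ⟨φA y + fB z, ?_⟩
    have e2A := LinearMap.congr_fun h2A y
    simp only [LinearMap.add_apply, LinearMap.comp_apply, LinearMap.zero_apply,
      hy, map_zero, add_zero] at e2A
    have hdc : dC (φA y) = fB (fA y) := by
      calc dC (φA y) = dC (φA y) + (fB (fA y) + fB (fA y)) := by
            rw [char2_add_self (k := k), add_zero]
        _ = (fB (fA y) + dC (φA y)) + fB (fA y) := by abel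
        _ = fB (fA y) := by rw [e2A, zero_add]
    have hb : dC (fB z) = fB (dB z) := by
      have h := LinearMap.congr_fun h1B z
      simpa only [LinearMap.comp_apply] using h
    rw [map_add, hdc, hb, ← map_add]

/-- Exactness of the induced triangle on homology: given differential modules
`M₀, M₁, M₂` indexed cyclically by `ℤ/3`, chain maps `fᵢ : Mᵢ → Mᵢ₊₁`, homotopies
`φᵢ : Mᵢ → Mᵢ₊₂` with `fᵢ₊₁ ∘ fᵢ + d φᵢ = 0`, and homotopies `κᵢ` with
`fᵢ₊₂ ∘ φᵢ + φᵢ₊₁ ∘ fᵢ + d κᵢ = id`, then for every cycle `x ∈ Mᵢ₊₁`,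
`fᵢ₊₁ x` is a boundary iff `x = fᵢ y + dᵢ₊₁ z` for some cycle `y ∈ Mᵢ` and `z ∈ Mᵢ₊₁`. -/
theorem stmt2 {k M0 M1 M2 : Type*} [CommRing k] [CharP k 2]
    [AddCommGroup M0] [Module k M0] [AddCommGroup M1] [Module k M1]
    [AddCommGroup M2] [Module k M2]
    (d0 : M0 →ₗ[k] M0) (d1 : M1 →ₗ[k] M1) (d2 : M2 →ₗ[k] M2)
    (hd0 : d0 ∘ₗ d0 = 0) (hd1 : d1 ∘ₗ d1 = 0) (hd2 : d2 ∘ₗ d2 = 0)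
    (f0 : M0 →ₗ[k] M1) (f1 : M1 →ₗ[k] M2) (f2 : M2 →ₗ[k] M0)
    (φ0 : M0 →ₗ[k] M2) (φ1 : M1 →ₗ[k] M0) (φ2 : M2 →ₗ[k] M1)
    (κ0 : M0 →ₗ[k] M0) (κ1 : M1 →ₗ[k] M1) (κ2 : M2 →ₗ[k] M2)
    (h1₀ : d1 ∘ₗ f0 = f0 ∘ₗ d0) (h1₁ : d2 ∘ₗ f1 = f1 ∘ₗ d1) (h1₂ : d0 ∘ₗ f2 = f2 ∘ₗ d2)
    (h2₀ : f1 ∘ₗ f0 + d2 ∘ₗ φ0 + φ0 ∘ₗ d0 = 0)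
    (h2₁ : f2 ∘ₗ f1 + d0 ∘ₗ φ1 + φ1 ∘ₗ d1 = 0)
    (h2₂ : f0 ∘ₗ f2 + d1 ∘ₗ φ2 + φ2 ∘ₗ d2 = 0)
    (h3₀ : f2 ∘ₗ φ0 + φ1 ∘ₗ f0 + d0 ∘ₗ κ0 + κ0 ∘ₗ d0 = LinearMap.id)
    (h3₁ : f0 ∘ₗ φ1 + φ2 ∘ₗ f1 + d1 ∘ₗ κ1 + κ1 ∘ₗ d1 = LinearMap.id)
    (h3₂ : f1 ∘ₗ φ2 + φ0 ∘ₗ f2 + d2 ∘ₗ κ2 + κ2 ∘ₗ d2 = LinearMap.id) :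
    (∀ x : M1, d1 x = 0 →
      ((∃ w : M2, d2 w = f1 x) ↔ ∃ y : M0, d0 y = 0 ∧ ∃ z : M1, x = f0 y + d1 z)) ∧
    (∀ x : M2, d2 x = 0 →
      ((∃ w : M0, d0 w = f2 x) ↔ ∃ y : M1, d1 y = 0 ∧ ∃ z : M2, x = f1 y + d2 z)) ∧
    (∀ x : M0, d0 x = 0 →
      ((∃ w : M1, d1 w = f0 x) ↔ ∃ y : M2, d2 y = 0 ∧ ∃ z : M0, x = f2 y + d0 z)) := by
  refine ⟨fun x hx => ?_, fun x hx => ?_, fun x hx => ?_⟩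
  · exact triangle_aux d0 d1 d2 f0 f1 f2 φ0 φ1 φ2 κ1 h1₁ h1₂ h2₀ h2₁ h2₂ h3₁ x hx
  · exact triangle_aux d1 d2 d0 f1 f2 f0 φ1 φ2 φ0 κ2 h1₂ h1₀ h2₁ h2₂ h2₀ h3₂ x hx
  · exact triangle_aux d2 d0 d1 f2 f0 f1 φ2 φ0 φ1 κ0 h1₀ h1₁ h2₂ h2₀ h2₁ h3₀ x hx
end
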